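/- arXiv:2501.12000 — 2 statements merged into one kernel-verified Lean document; each statement's English description precedes it below -/
import Mathlib

section
/- Let H^C and H^B be Hermitian operators on a finite-dimensional complex Hilbert space ℋ, let ψ₀ ∈ ℋ be a unit vector, set ψ(t) = exp(−i t H^C) ψ₀ and E(t) = ⟨ψ(t), H^B ψ(t)⟩. Then for every T > 0 the average charging power satisfies |E(T) − E(0)| / T ≤ ‖[H^C, H^B]‖. -/
/-!
Along the flow `ψ t = exp (-i t H) ψ₀` the expectation `⟪ψ t, B (ψ t)⟫` has derivative
`i ⟪ψ t, [H, B] ψ t⟫` (Heisenberg's equation). The flow is unitary, so `‖ψ t‖ = 1` and this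
derivative is bounded by `‖[H, B]‖`; the mean value inequality then bounds the change of the
expectation over `[0, T]` by `‖[H, B]‖ T`.
-/

open NormedSpace Complex

section

variable {E : Type*} [NormedAddCommGroup E] [InnerProductSpace ℂ E]

theorem norm_inner_apply_self_le (D : E →L[ℂ] E) (v : E) :
    ‖(inner ℂ v (D v) : ℂ)‖ ≤ ‖D‖ * ‖v‖ ^ 2 :=
  calc ‖(inner ℂ v (D v) : ℂ)‖ ≤ ‖v‖ * ‖D v‖ := norm_inner_le_norm _ _
    _ ≤ ‖v‖ * (‖D‖ * ‖v‖) := by gcongr; exact D.le_opNorm v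
    _ = ‖D‖ * ‖v‖ ^ 2 := by ring

variable [CompleteSpace E]

theorem hasDerivAt_exp_neg_I_mul_smul_apply (H : E →L[ℂ] E) (v : E) (t : ℝ) :
    HasDerivAt (fun s : ℝ => exp ((-(I * s)) • H) v)
      ((-I) • H (exp ((-(I * t)) • H) v)) t := by
  have hphase : HasDerivAt (fun s : ℝ => -(I * s)) (-I) t := by
    simpa using ((hasDerivAt_id (t : ℂ)).const_mul I).neg.comp_ofReal
  have hexp := ((hasDerivAt_exp_smul_const' H (-(I * t))).clm_apply
    (hasDerivAt_const _ v)).scomp t hphase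
  simpa [Function.comp_def] using hexp

theorem norm_exp_neg_I_mul_smul_apply {H : E →L[ℂ] E} (hH : IsSelfAdjoint H) (t : ℝ) (v : E) :
    ‖exp ((-(I * t)) • H) v‖ = ‖v‖ := by
  have hphase : -(I * t) ∈ skewAdjoint ℂ := by
    rw [skewAdjoint.mem_iff]
    simp
  have hskew : (-(I * t)) • H ∈ skewAdjoint (E →L[ℂ] E) := hH.smul_mem_skewAdjoint hphase
  -- the algebraic properties of `exp` are stated for ℚ-algebras
  let +nondep : NormedAlgebra ℚ (E →L[ℂ] E) := .restrictScalars ℚ ℂ _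
  have hunitary := exp_mem_unitary_of_mem_skewAdjoint hskew
  exact ContinuousLinearMap.norm_map_of_mem_unitary hunitary v

theorem hasDerivAt_inner_apply_of_hasDerivAt_neg_I_smul {H : E →L[ℂ] E} (hH : IsSelfAdjoint H)
    (B : E →L[ℂ] E) {ψ : ℝ → E} {t : ℝ} (hψ : HasDerivAt ψ ((-I) • H (ψ t)) t) :
    HasDerivAt (fun s => (inner ℂ (ψ s) (B (ψ s)) : ℂ))
      (I * inner ℂ (ψ t) ((H * B - B * H) (ψ t))) t := by
  have hBψ := ((B.restrictScalars ℝ).hasFDerivAt (x := ψ t)).comp_hasDerivAt t hψ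
  refine (hψ.inner ℂ hBψ).congr_deriv ?_
  have hsymm : inner ℂ (H (ψ t)) (B (ψ t)) = inner ℂ (ψ t) (H (B (ψ t))) := hH.isSymmetric _ _
  simp only [neg_smul, ContinuousLinearMap.coe_restrictScalars', map_neg, map_smul,
    inner_neg_right, inner_smul_right, Function.comp_apply, inner_neg_left, inner_smul_left,
    conj_I, sub_apply, mul_apply_eq_comp, inner_sub_right, hsymm]
  ring

theorem norm_inner_apply_sub_le_of_hasDerivAt_neg_I_smul {H : E →L[ℂ] E} (hH : IsSelfAdjoint H)
    (B : E →L[ℂ] E) {ψ : ℝ → E} (hψ : ∀ t, HasDerivAt ψ ((-I) • H (ψ t)) t)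
    (hnorm : ∀ t, ‖ψ t‖ = 1) (a b : ℝ) :
    ‖(inner ℂ (ψ b) (B (ψ b)) : ℂ) - inner ℂ (ψ a) (B (ψ a))‖ ≤ ‖H * B - B * H‖ * ‖b - a‖ := by
  refine Convex.norm_image_sub_le_of_norm_hasDerivWithin_le
    (fun t _ => (hasDerivAt_inner_apply_of_hasDerivAt_neg_I_smul hH B (hψ t)).hasDerivWithinAt)
    (fun t _ => ?_) convex_univ (Set.mem_univ a) (Set.mem_univ b)
  simpa [hnorm t] using norm_inner_apply_self_le (H * B - B * H) (ψ t)

end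

theorem average_power_bound_general
    {E : Type*} [NormedAddCommGroup E] [InnerProductSpace ℂ E] [FiniteDimensional ℂ E]
    (HC HB : E →L[ℂ] E) (hHC : IsSelfAdjoint HC)
    (ψ₀ : E) (hψ₀ : ‖ψ₀‖ = 1)
    (ψ : ℝ → E) (hψ : ∀ t : ℝ, ψ t = NormedSpace.exp ((-(Complex.I * t)) • HC) ψ₀)
    (En : ℝ → ℝ) (hEn : ∀ t : ℝ, En t = (inner ℂ (ψ t) (HB (ψ t)) : ℂ).re)
    (T : ℝ) (hT : 0 < T) :
    |En T - En 0| / T ≤ ‖HC * HB - HB * HC‖ := by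
  obtain rfl : ψ = fun t : ℝ => exp ((-(I * t)) • HC) ψ₀ := funext hψ
  have hchange := norm_inner_apply_sub_le_of_hasDerivAt_neg_I_smul hHC HB
    (hasDerivAt_exp_neg_I_mul_smul_apply HC ψ₀)
    (fun t => (norm_exp_neg_I_mul_smul_apply hHC t ψ₀).trans hψ₀) 0 T
  rw [sub_zero, Real.norm_of_nonneg hT.le] at hchange
  rw [div_le_iff₀ hT, hEn, hEn, ← Complex.sub_re]
  exact (abs_re_le_norm _).trans hchange

/-- The average charging power over `[0, T]` is bounded by `‖[H^C, H^B]‖`. -/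
theorem average_power_bound
    {E : Type*} [NormedAddCommGroup E] [InnerProductSpace ℂ E] [FiniteDimensional ℂ E]
    (HC HB : E →L[ℂ] E) (hHC : IsSelfAdjoint HC) (hHB : IsSelfAdjoint HB)
    (ψ₀ : E) (hψ₀ : ‖ψ₀‖ = 1)
    (ψ : ℝ → E) (hψ : ∀ t : ℝ, ψ t = NormedSpace.exp ((-(Complex.I * t)) • HC) ψ₀)
    (En : ℝ → ℝ) (hEn : ∀ t : ℝ, En t = (inner ℂ (ψ t) (HB (ψ t)) : ℂ).re)
    (T : ℝ) (hT : 0 < T) :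
    |En T - En 0| / T ≤ ‖HC * HB - HB * HC‖ :=
  average_power_bound_general HC HB hHC ψ₀ hψ₀ ψ hψ En hEn T hT
end

section
/- Let ℋ = ⨂_{i=1}^N ℂ^d be the finite tensor product of N copies of ℂ^d. Let (h_Y)_{Y ∈ F} be a finite family of Hermitian operators on ℋ, where each index Y is a nonempty subset of {1,…,N} with |Y| ≤ q, each h_Y is supported on Y, and set H = Σ_{Y ∈ F} h_Y; assume H is g-extensive, i.e., Σ_{Y : i ∈ Y} ‖h_Y‖ ≤ g for every site i. Let O be an operator on ℋ supported on a subset X ⊆ {1,…,N}, and set A = Σ_{Y : Y ∩ X ≠ ∅} ‖h_Y‖. Then for every n ≥ 1 the n-fold nested commutator satisfies ‖ad_H^n(O)‖ ≤ 2^n · ‖O‖ · ∏_{j=0}^{n−1} (A + j·g·q). -/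
/-- The lattice Hilbert space `⨂_{i=1}^N ℂ^d`, realized as `ℂ`-valued functions on
configurations `Fin N → Fin d`. -/
abbrev LatticeSpace (N d : ℕ) := EuclideanSpace ℂ (Fin N → Fin d)

open scoped Classical in
/-- An operator on `⨂_{i=1}^N ℂ^d` is supported on `X ⊆ {1,…,N}` if it acts as the identity on
all tensor factors outside `X`, i.e. its matrix elements vanish unless the configurations agree
outside `X` and depend only on the restrictions of the configurations to `X`. -/
def IsSupportedOn (N d : ℕ) (h : LatticeSpace N d →L[ℂ] LatticeSpace N d)
    (X : Finset (Fin N)) : Prop :=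
  ∃ a : (X → Fin d) → (X → Fin d) → ℂ,
    ∀ σ τ : Fin N → Fin d,
      (inner ℂ (EuclideanSpace.single σ (1 : ℂ)) (h (EuclideanSpace.single τ (1 : ℂ))) : ℂ) =
        if (∀ i ∉ X, σ i = τ i) then a (fun i => σ i) (fun i => τ i) else 0

/-- `adPow H n O` is the `n`-fold iterated commutator `ad_H^n(O)`. -/
noncomputable def adPow {E : Type*} [NormedAddCommGroup E] [InnerProductSpace ℂ E]
    (H : E →L[ℂ] E) : ℕ → (E →L[ℂ] E) → (E →L[ℂ] E)
  | 0, O => O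
  | n + 1, O => H * adPow H n O - adPow H n O * H

/-!
Peeling off the innermost commutator, `ad_H^{n+1}(T) = Σ_Y ad_H^n([h_Y, T])`. Operators with
disjoint supports commute, so only the terms `h_Y` meeting the support `Z` of `T` contribute, and
`[h_Y, T]` is supported on `Y ∪ Z`. The terms meeting `Y ∪ Z` have total norm at most
`A_Z + g q`, where `A_Z` is the total norm of the terms meeting `Z`, since `|Y| ≤ q` and every site
carries weight at most `g`. An induction on `n`, over all operators `T` at once, therefore gives
`‖ad_H^n(T)‖ ≤ 2ⁿ ‖T‖ ∏_{j<n} (A_Z + j g q)`.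
-/

open Finset

namespace Matrix

variable {ι κ R : Type*}

/-- `A` is `a ⊗ 1` for the splitting of the sites into `X` and its complement, expressed through
its entries: invariance under relabelling the local states off `X` says that an entry depends only
on the restrictions of the two configurations to `X`. -/
structure SupportedOn [Zero R] (A : Matrix (ι → κ) (ι → κ) R) (X : Finset ι) : Prop where
  agree_of_ne_zero : ∀ {σ τ}, A σ τ ≠ 0 → ∀ i ∉ X, σ i = τ i
  apply_piCongrRight : ∀ e : ι → Equiv.Perm κ, (∀ i ∈ X, e i = 1) →
    ∀ σ τ, A (Equiv.piCongrRight e σ) (Equiv.piCongrRight e τ) = A σ τ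

namespace SupportedOn

variable {A B : Matrix (ι → κ) (ι → κ) R} {X Y : Finset ι}

theorem sub [AddGroup R] (hA : A.SupportedOn X) (hB : B.SupportedOn X) :
    (A - B).SupportedOn X where
  agree_of_ne_zero {σ τ} h i hi := by
    by_cases hAστ : A σ τ = 0
    · exact hB.agree_of_ne_zero (fun hBστ => h (by simp [hAστ, hBστ])) i hi
    · exact hA.agree_of_ne_zero hAστ i hi
  apply_piCongrRight e he σ τ := by
    simp only [sub_apply, hA.apply_piCongrRight e he, hB.apply_piCongrRight e he]

variable [Fintype ι] [DecidableEq ι] [Fintype κ]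

theorem mul [NonUnitalNonAssocSemiring R] (hA : A.SupportedOn X) (hB : B.SupportedOn Y) :
    (A * B).SupportedOn (X ∪ Y) where
  agree_of_ne_zero {σ τ} h i hi := by
    obtain ⟨ρ, -, hρ⟩ := exists_ne_zero_of_sum_ne_zero h
    rw [mem_union, not_or] at hi
    exact (hA.agree_of_ne_zero (left_ne_zero_of_mul hρ) i hi.1).trans
      (hB.agree_of_ne_zero (right_ne_zero_of_mul hρ) i hi.2)
  apply_piCongrRight e he σ τ := by
    simp only [mul_apply]
    refine (Equiv.sum_comp (Equiv.piCongrRight e) _).symm.trans (sum_congr rfl fun ρ _ => ?_)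
    rw [hA.apply_piCongrRight e fun i hi => he i (mem_union_left _ hi),
      hB.apply_piCongrRight e fun i hi => he i (mem_union_right _ hi)]

variable [DecidableEq κ]

theorem mul_apply_of_disjoint [NonUnitalNonAssocSemiring R] (hA : A.SupportedOn X)
    (hB : B.SupportedOn Y) (hXY : Disjoint X Y) {σ τ : ι → κ} (hστ : ∀ i ∉ X ∪ Y, σ i = τ i) :
    (A * B) σ τ = A σ (X.piecewise τ σ) * B σ (Y.piecewise τ σ) := by
  have hYX : ∀ i ∈ Y, i ∉ X := fun i hi hiX => disjoint_left.mp hXY hiX hi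
  -- the only intermediate configuration is `τ` on `X` and `σ` elsewhere
  rw [mul_apply, sum_eq_single (X.piecewise τ σ) _ (by simp)]
  · set e : ι → Equiv.Perm κ := fun j => if j ∈ X then Equiv.swap (τ j) (σ j) else 1
    have he : ∀ i ∈ Y, e i = 1 := fun i hi => if_neg (hYX i hi)
    have heσ : Equiv.piCongrRight e σ = X.piecewise τ σ := by
      ext i; by_cases hiX : i ∈ X <;> simp [e, hiX]
    have heτ : Equiv.piCongrRight e (Y.piecewise τ σ) = τ := by
      ext i
      by_cases hiX : i ∈ X
      · have hiY : i ∉ Y := fun hiY => hYX i hiY hiX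
        simp [e, hiX, hiY]
      · by_cases hiY : i ∈ Y <;> simp [e, hiX, hiY, hστ i]
    have hBe := hB.apply_piCongrRight e he σ (Y.piecewise τ σ)
    rw [heσ, heτ] at hBe
    rw [hBe]
  · intro ρ _ hρ
    by_contra h
    have hσρ := hA.agree_of_ne_zero (left_ne_zero_of_mul h)
    have hρτ := hB.agree_of_ne_zero (right_ne_zero_of_mul h)
    refine hρ (funext fun i => ?_)
    by_cases hiX : i ∈ X
    · rw [piecewise_eq_of_mem _ _ _ hiX, hρτ i (disjoint_left.mp hXY hiX)]
    · rw [piecewise_eq_of_notMem _ _ _ hiX, hσρ i hiX]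

theorem commute [CommSemiring R] (hA : A.SupportedOn X) (hB : B.SupportedOn Y)
    (hXY : Disjoint X Y) : Commute A B := by
  ext σ τ
  by_cases hστ : ∀ i ∉ X ∪ Y, σ i = τ i
  · rw [hA.mul_apply_of_disjoint hB hXY hστ, mul_comm,
      hB.mul_apply_of_disjoint hA hXY.symm (union_comm X Y ▸ hστ)]
  · push Not at hστ
    obtain ⟨i, hi, hne⟩ := hστ
    have hAB : (A * B) σ τ = 0 :=
      by_contra fun h => hne ((hA.mul hB).agree_of_ne_zero h i hi)
    have hBA : (B * A) σ τ = 0 :=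
      by_contra fun h => hne ((hB.mul hA).agree_of_ne_zero h i (union_comm X Y ▸ hi))
    rw [hAB, hBA]

end SupportedOn
end Matrix

namespace ContinuousLinearMap

variable {𝕜 ι κ : Type*} [RCLike 𝕜] [Fintype ι] [DecidableEq ι] [Fintype κ] [DecidableEq κ]

def SupportedOn (T : EuclideanSpace 𝕜 (ι → κ) →L[𝕜] EuclideanSpace 𝕜 (ι → κ))
    (X : Finset ι) : Prop :=
  ((Matrix.toEuclideanCLM (n := ι → κ) (𝕜 := 𝕜)).symm T).SupportedOn X

variable {S T : EuclideanSpace 𝕜 (ι → κ) →L[𝕜] EuclideanSpace 𝕜 (ι → κ)} {X Y : Finset ι}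

theorem SupportedOn.commute (hS : S.SupportedOn X) (hT : T.SupportedOn Y) (hXY : Disjoint X Y) :
    Commute S T := by
  simpa using (Matrix.SupportedOn.commute hS hT hXY).map
    (Matrix.toEuclideanCLM (n := ι → κ) (𝕜 := 𝕜))

theorem SupportedOn.mul_sub_mul (hS : S.SupportedOn X) (hT : T.SupportedOn Y) :
    (S * T - T * S).SupportedOn (X ∪ Y) := by
  unfold SupportedOn at *
  rw [map_sub, map_mul, map_mul]
  exact (hS.mul hT).sub (union_comm Y X ▸ hT.mul hS)

end ContinuousLinearMap

theorem IsSupportedOn.supportedOn {N d : ℕ} {T : LatticeSpace N d →L[ℂ] LatticeSpace N d}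
    {X : Finset (Fin N)} (hT : IsSupportedOn N d T X) : T.SupportedOn X := by
  obtain ⟨a, ha⟩ := hT
  have entry : ∀ σ τ, (Matrix.toEuclideanCLM (n := Fin N → Fin d) (𝕜 := ℂ)).symm T σ τ =
      if (∀ i ∉ X, σ i = τ i) then a (fun i => σ i) (fun i => τ i) else 0 := by
    intro σ τ
    rw [← ha]
    simp [Matrix.toEuclideanCLM, LinearMap.toMatrixOrthonormal_apply_apply]
  constructor
  · intro σ τ h i hi
    by_contra hne
    exact h (by rw [entry, if_neg fun h' => hne (h' i hi)])
  · intro e he σ τ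
    have he' : ∀ i : X, e i = 1 := fun i => he i i.2
    simp only [entry, Equiv.piCongrRight_apply, Pi.map_apply, (e _).apply_eq_iff_eq, he',
      Equiv.Perm.coe_one, id]

section adPow

variable {E : Type*} [NormedAddCommGroup E] [InnerProductSpace ℂ E] (H : E →L[ℂ] E)

theorem adPow_eq_pow_apply (n : ℕ) (O : E →L[ℂ] E) :
    adPow H n O = ((LinearMap.mulLeft ℂ H - LinearMap.mulRight ℂ H) ^ n) O := by
  induction n with
  | zero => rfl
  | succ n ih => rw [pow_succ', Module.End.mul_apply, ← ih]; rfl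

theorem adPow_succ' (n : ℕ) (O : E →L[ℂ] E) : adPow H (n + 1) O = adPow H n (H * O - O * H) := by
  rw [adPow_eq_pow_apply, adPow_eq_pow_apply, pow_succ, Module.End.mul_apply]
  rfl

theorem adPow_sum {α : Type*} (s : Finset α) (f : α → E →L[ℂ] E) (n : ℕ) :
    adPow H n (∑ a ∈ s, f a) = ∑ a ∈ s, adPow H n (f a) := by
  simp only [adPow_eq_pow_apply, map_sum]

theorem adPow_zero_right (n : ℕ) : adPow H n 0 = 0 := by
  rw [adPow_eq_pow_apply, map_zero]

end adPow

theorem norm_mul_sub_mul_le {R : Type*} [NonUnitalSeminormedRing R] (a b : R) :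
    ‖a * b - b * a‖ ≤ 2 * ‖a‖ * ‖b‖ := by
  calc ‖a * b - b * a‖ ≤ ‖a‖ * ‖b‖ + ‖b‖ * ‖a‖ :=
        (norm_sub_le _ _).trans (add_le_add (norm_mul_le _ _) (norm_mul_le _ _))
    _ = 2 * ‖a‖ * ‖b‖ := by ring

section incidentWeight

variable {ι : Type*} [DecidableEq ι] (F : Finset (Finset ι)) (w : Finset ι → ℝ)

def incidentWeight (Z : Finset ι) : ℝ :=
  ∑ Y ∈ F.filter (fun Y => (Y ∩ Z).Nonempty), w Y

variable {F w}

theorem incidentWeight_nonneg (hw : ∀ Y, 0 ≤ w Y) (Z : Finset ι) : 0 ≤ incidentWeight F w Z :=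
  sum_nonneg fun Y _ => hw Y

theorem incidentWeight_union_le (hw : ∀ Y, 0 ≤ w Y) (U Z : Finset ι) :
    incidentWeight F w (U ∪ Z) ≤ incidentWeight F w U + incidentWeight F w Z := by
  have hfilter : F.filter (fun Y => (Y ∩ (U ∪ Z)).Nonempty) =
      F.filter (fun Y => (Y ∩ U).Nonempty) ∪ F.filter (fun Y => (Y ∩ Z).Nonempty) := by
    rw [← filter_or]
    simp only [inter_union_distrib_left, union_nonempty]
  rw [incidentWeight, hfilter, incidentWeight, incidentWeight, ← sum_union_inter]
  exact le_add_of_nonneg_right (sum_nonneg fun Y _ => hw Y)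

theorem incidentWeight_le_card_mul (hw : ∀ Y, 0 ≤ w Y) {g : ℝ}
    (hext : ∀ i, ∑ Y ∈ F.filter (fun Y => i ∈ Y), w Y ≤ g) (U : Finset ι) :
    incidentWeight F w U ≤ U.card * g := by
  calc incidentWeight F w U
      ≤ ∑ Y ∈ F.filter (fun Y => (Y ∩ U).Nonempty), ∑ i ∈ U.filter (· ∈ Y), w Y := by
        refine sum_le_sum fun Y hY => ?_
        obtain ⟨i, hi⟩ := (mem_filter.mp hY).2
        have hcard : 1 ≤ (U.filter (· ∈ Y)).card :=
          card_pos.mpr ⟨i, mem_filter.mpr ⟨(mem_inter.mp hi).2, (mem_inter.mp hi).1⟩⟩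
        rw [sum_const, nsmul_eq_mul]
        exact le_mul_of_one_le_left (hw Y) (by exact_mod_cast hcard)
    _ ≤ ∑ Y ∈ F, ∑ i ∈ U.filter (· ∈ Y), w Y :=
        sum_le_sum_of_subset_of_nonneg (filter_subset _ _)
          fun Y _ _ => sum_nonneg fun _ _ => hw Y
    _ = ∑ i ∈ U, ∑ Y ∈ F.filter (fun Y => i ∈ Y), w Y := by
        simp only [sum_filter]; exact sum_comm
    _ ≤ U.card * g := by
        rw [← nsmul_eq_mul]; exact sum_le_card_nsmul _ _ _ fun i _ => hext i

theorem incidentWeight_union_le_add_mul (hw : ∀ Y, 0 ≤ w Y) {q : ℕ} {g : ℝ}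
    (hloc : ∀ Y ∈ F, Y.card ≤ q) (hext : ∀ i, ∑ Y ∈ F.filter (fun Y => i ∈ Y), w Y ≤ g)
    {Y : Finset ι} (hY : Y ∈ F) (hg : 0 ≤ g) (Z : Finset ι) :
    incidentWeight F w (Y ∪ Z) ≤ incidentWeight F w Z + q * g :=
  calc incidentWeight F w (Y ∪ Z) ≤ incidentWeight F w Y + incidentWeight F w Z :=
        incidentWeight_union_le hw Y Z
    _ ≤ Y.card * g + incidentWeight F w Z := by
        gcongr; exact incidentWeight_le_card_mul hw hext Y
    _ ≤ incidentWeight F w Z + q * g := by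
        rw [add_comm]; gcongr; exact_mod_cast hloc Y hY

end incidentWeight

section LocalHamiltonian

variable {ι κ : Type*} [Fintype ι] [DecidableEq ι] [Fintype κ] [DecidableEq κ]
  {F : Finset (Finset ι)} {h : Finset ι → EuclideanSpace ℂ (ι → κ) →L[ℂ] EuclideanSpace ℂ (ι → κ)}
  {q : ℕ} {g : ℝ}

theorem norm_adPow_le (hsupp : ∀ Y ∈ F, (h Y).SupportedOn Y) (hloc : ∀ Y ∈ F, Y.card ≤ q)
    (hext : ∀ i, ∑ Y ∈ F.filter (fun Y => i ∈ Y), ‖h Y‖ ≤ g)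
    {H : EuclideanSpace ℂ (ι → κ) →L[ℂ] EuclideanSpace ℂ (ι → κ)} (hH : H = ∑ Y ∈ F, h Y)
    (n : ℕ) {Z : Finset ι} {T : EuclideanSpace ℂ (ι → κ) →L[ℂ] EuclideanSpace ℂ (ι → κ)}
    (hT : T.SupportedOn Z) :
    ‖adPow H n T‖ ≤ 2 ^ n * ‖T‖ * ∏ j ∈ range n, (incidentWeight F (‖h ·‖) Z + j * (g * q)) := by
  induction n generalizing Z T with
  | zero => simp [adPow]
  | succ n ih =>
    set A := incidentWeight F (‖h ·‖) Z
    set P := ∏ j ∈ range n, (A + ((j + 1 : ℕ) : ℝ) * (g * q))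
    have hvanish : ∀ Y ∈ F, adPow H n (h Y * T - T * h Y) ≠ 0 → (Y ∩ Z).Nonempty := by
      intro Y hY hne
      by_contra hYZ
      refine hne ?_
      rw [((hsupp Y hY).commute hT (disjoint_iff_inter_eq_empty.mpr
        (not_nonempty_iff_eq_empty.mp hYZ))).eq, sub_self, adPow_zero_right]
    have hterm : ∀ Y ∈ F.filter (fun Y => (Y ∩ Z).Nonempty),
        ‖adPow H n (h Y * T - T * h Y)‖ ≤ 2 ^ (n + 1) * ‖T‖ * P * ‖h Y‖ := by
      intro Y hY
      obtain ⟨hYF, i, hi⟩ := mem_filter.mp hY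
      have hg : 0 ≤ g := (sum_nonneg fun _ _ => norm_nonneg _).trans (hext i)
      have hfactor : ∀ j ∈ range n, 0 ≤ incidentWeight F (‖h ·‖) (Y ∪ Z) + j * (g * q) :=
        fun j _ => add_nonneg (incidentWeight_nonneg (fun _ => norm_nonneg _) _) (by positivity)
      calc ‖adPow H n (h Y * T - T * h Y)‖
          ≤ 2 ^ n * ‖h Y * T - T * h Y‖ *
              ∏ j ∈ range n, (incidentWeight F (‖h ·‖) (Y ∪ Z) + j * (g * q)) :=
            ih ((hsupp Y hYF).mul_sub_mul hT)
        _ ≤ 2 ^ n * (2 * ‖h Y‖ * ‖T‖) * P := by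
            gcongr 2 ^ n * ?_ * ?_
            · exact prod_nonneg hfactor
            · exact norm_mul_sub_mul_le _ _
            · refine prod_le_prod hfactor fun j _ => ?_
              have := incidentWeight_union_le_add_mul (fun _ => norm_nonneg _) hloc hext hYF hg Z
              push_cast
              linarith
        _ = 2 ^ (n + 1) * ‖T‖ * P * ‖h Y‖ := by ring
    calc ‖adPow H (n + 1) T‖
        = ‖∑ Y ∈ F.filter (fun Y => (Y ∩ Z).Nonempty), adPow H n (h Y * T - T * h Y)‖ := by
          have hHT : H * T - T * H = ∑ Y ∈ F, (h Y * T - T * h Y) := by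
            rw [hH, sum_mul, mul_sum, sum_sub_distrib]
          rw [adPow_succ', hHT, adPow_sum, sum_filter_of_ne hvanish]
      _ ≤ ∑ Y ∈ F.filter (fun Y => (Y ∩ Z).Nonempty), 2 ^ (n + 1) * ‖T‖ * P * ‖h Y‖ :=
          (norm_sum_le _ _).trans (sum_le_sum hterm)
      _ = 2 ^ (n + 1) * ‖T‖ * ∏ j ∈ range (n + 1), (A + j * (g * q)) := by
          rw [← mul_sum, prod_range_succ']
          simp only [P, A, incidentWeight, Nat.cast_zero, zero_mul, add_zero]
          ring

end LocalHamiltonian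

theorem nested_commutator_bound_general (N d q : ℕ) (g : ℝ)
    (F : Finset (Finset (Fin N)))
    (hB : Finset (Fin N) → (LatticeSpace N d →L[ℂ] LatticeSpace N d))
    (hsupp : ∀ Y ∈ F, IsSupportedOn N d (hB Y) Y)
    (hloc : ∀ Y ∈ F, Y.card ≤ q)
    (hext : ∀ i : Fin N, ∑ Y ∈ F.filter (fun Y => i ∈ Y), ‖hB Y‖ ≤ g)
    (H : LatticeSpace N d →L[ℂ] LatticeSpace N d) (hH : H = ∑ Y ∈ F, hB Y)
    (X : Finset (Fin N)) (O : LatticeSpace N d →L[ℂ] LatticeSpace N d)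
    (hO : IsSupportedOn N d O X)
    (A : ℝ) (hA : A = ∑ Y ∈ F.filter (fun Y => (Y ∩ X).Nonempty), ‖hB Y‖)
    (n : ℕ) :
    ‖adPow H n O‖ ≤ 2 ^ n * ‖O‖ * ∏ j ∈ Finset.range n, (A + j * (g * q)) := by
  subst hA
  exact norm_adPow_le (fun Y hY => (hsupp Y hY).supportedOn) hloc hext hH n hO.supportedOn

/-- For a `q`-local `g`-extensive Hamiltonian `H = Σ_Y h_Y` and an operator `O` supported on `X`,
with `A = Σ_{Y ∩ X ≠ ∅} ‖h_Y‖`, the nested commutators satisfy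
`‖ad_H^n(O)‖ ≤ 2ⁿ ‖O‖ ∏_{j=0}^{n−1} (A + j g q)`. -/
theorem nested_commutator_bound (N d q : ℕ) (g : ℝ)
    (F : Finset (Finset (Fin N)))
    (hB : Finset (Fin N) → (LatticeSpace N d →L[ℂ] LatticeSpace N d))
    (hsa : ∀ Y ∈ F, IsSelfAdjoint (hB Y))
    (hne : ∀ Y ∈ F, Y.Nonempty)
    (hsupp : ∀ Y ∈ F, IsSupportedOn N d (hB Y) Y)
    (hloc : ∀ Y ∈ F, Y.card ≤ q)
    (hext : ∀ i : Fin N, ∑ Y ∈ F.filter (fun Y => i ∈ Y), ‖hB Y‖ ≤ g)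
    (H : LatticeSpace N d →L[ℂ] LatticeSpace N d) (hH : H = ∑ Y ∈ F, hB Y)
    (X : Finset (Fin N)) (O : LatticeSpace N d →L[ℂ] LatticeSpace N d)
    (hO : IsSupportedOn N d O X)
    (A : ℝ) (hA : A = ∑ Y ∈ F.filter (fun Y => (Y ∩ X).Nonempty), ‖hB Y‖)
    (n : ℕ) (hn : 1 ≤ n) :
    ‖adPow H n O‖ ≤ 2 ^ n * ‖O‖ * ∏ j ∈ Finset.range n, (A + j * (g * q)) :=
  nested_commutator_bound_general N d q g F hB hsupp hloc hext H hH X O hO A hA n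
end
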